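/- Let n ≥ 1 be an integer, x₀ ∈ ℝ, and let f : ℝ → [0,∞) be measurable with ∫_{x₀}^∞ f(t) dt < ∞. Then for every x ≥ x₀, J_n(x) := ∫_{[0,∞)^{2n}} ∏_{j=1}^{2n−1} f(x+t_j+t_{j+1}) · f(x+t_{2n}) dt₁ ⋯ dt_{2n} ≤ (∫_{x₀}^∞ f(t) dt)^{2n}. -/

import Mathlib

/-!
Integrate the variables out one at a time, starting with `t₁`. For fixed `t₂ ≥ 0` the
substitution `u = x + t₁ + t₂` gives `∫₀^∞ f(x + t₁ + t₂) dt₁ = ∫_{x + t₂}^∞ f ≤ ∫_{x₀}^∞ f`,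
because `x + t₂ ≥ x₀` and `f ≥ 0`. By Tonelli, each of the `2n` factors of the chain therefore
contributes at most one factor `∫_{x₀}^∞ f`, the last one `f(x + t_{2n})` included.
-/

open MeasureTheory ENNReal Set

/-- `J_n(x) = ∫_{[0,∞)^{2n}} ∏_{j=1}^{2n−1} f(x+t_j+t_{j+1}) · f(x+t_{2n}) dt`. -/
noncomputable def chainJ (f : ℝ → ℝ) (n : ℕ) (hn : 1 ≤ n) (x : ℝ) : ℝ≥0∞ :=
  ∫⁻ t in {t : Fin (2 * n) → ℝ | ∀ i, 0 ≤ t i},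
    (∏ j : Fin (2 * n - 1),
      ENNReal.ofReal (f (x + t ⟨j.1, by have := j.isLt; omega⟩
        + t ⟨j.1 + 1, by have := j.isLt; omega⟩))) *
    ENNReal.ofReal (f (x + t ⟨2 * n - 1, by omega⟩))

theorem setLIntegral_Ici_zero_comp_add_le (g : ℝ → ℝ≥0∞) {a b : ℝ} (hab : a ≤ b) :
    ∫⁻ s in Ici 0, g (s + b) ≤ ∫⁻ u in Ici a, g u := by
  have hshift := (measurePreserving_add_right volume b).setLIntegral_comp_preimage_emb
    (measurableEmbedding_addRight b) g (Ici b)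
  rw [preimage_add_const_Ici, sub_self] at hshift
  exact hshift ▸ lintegral_mono_set (Ici_subset_Ici.2 hab)

theorem volume_restrict_nonneg_eq_pi (ι : Type*) [Fintype ι] :
    (volume : Measure (ι → ℝ)).restrict {t | ∀ i, 0 ≤ t i} =
      Measure.pi fun _ => volume.restrict (Ici 0) := by
  rw [← Measure.restrict_pi_pi]
  congr 1
  ext t
  simp only [mem_ofPred_eq, mem_pi, mem_univ, mem_Ici, forall_const]

noncomputable def chainProd (g : ℝ → ℝ≥0∞) {k : ℕ} (t : Fin (k + 1) → ℝ) : ℝ≥0∞ :=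
  (∏ j : Fin k, g (t j.castSucc + t j.succ)) * g (t (Fin.last k))

section chainProd

variable {g : ℝ → ℝ≥0∞} {k : ℕ}

theorem chainProd_cons (a : ℝ) (s : Fin (k + 1) → ℝ) :
    chainProd g (Fin.cons a s) = g (a + s 0) * chainProd g s := by
  simp [chainProd, Fin.prod_univ_succ, ← Fin.succ_last, mul_assoc]

theorem measurable_chainProd (hg : Measurable g) : Measurable (chainProd g (k := k)) := by
  unfold chainProd
  fun_prop

theorem lintegral_chainProd_le (hg : Measurable g) {I : ℝ≥0∞}
    (hI : ∀ c, 0 ≤ c → ∫⁻ s in Ici 0, g (s + c) ≤ I) (k : ℕ) :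
    ∫⁻ t, chainProd g t ∂(Measure.pi fun _ : Fin (k + 1) => volume.restrict (Ici 0)) ≤
      I ^ (k + 1) := by
  set μ : Measure ℝ := volume.restrict (Ici 0)
  induction k with
  | zero =>
    have hunique := (measurePreserving_funUnique μ (Fin 1)).lintegral_map_equiv g
    simp only [chainProd, Finset.univ_eq_empty, Finset.prod_empty, one_mul, zero_add, pow_one]
    convert hI 0 le_rfl using 1
    simp only [add_zero]
    exact hunique.symm
  | succ k ih =>
    have he := measurePreserving_piFinSuccAbove (fun _ : Fin (k + 2) => μ) 0
    set e := MeasurableEquiv.piFinSuccAbove (fun _ : Fin (k + 2) => ℝ) 0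
    calc ∫⁻ t, chainProd g t ∂(Measure.pi fun _ : Fin (k + 1 + 1) => μ)
        = ∫⁻ p, chainProd g (e.symm p) ∂(μ.prod (Measure.pi fun _ => μ)) :=
          he.symm.lintegral_map_equiv (chainProd g)
      _ = ∫⁻ s, ∫⁻ a, chainProd g (e.symm (a, s)) ∂μ ∂(Measure.pi fun _ => μ) :=
          lintegral_prod_symm _ ((measurable_chainProd hg).comp e.symm.measurable).aemeasurable
      _ = ∫⁻ s, (∫⁻ a, g (a + s 0) ∂μ) * chainProd g s
            ∂(Measure.pi fun _ : Fin (k + 1) => μ) := by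
          simp only [e, MeasurableEquiv.piFinSuccAbove_symm_apply, Fin.insertNthEquiv_zero]
          refine lintegral_congr fun s => ?_
          rw [← lintegral_mul_const _ (by fun_prop)]
          exact lintegral_congr fun a => chainProd_cons a s
      _ ≤ ∫⁻ s, I * chainProd g s ∂(Measure.pi fun _ => μ) :=
          lintegral_mono_ae <| ((Measure.tendsto_eval_ae_ae (i := (0 : Fin (k + 1)))).eventually
            (ae_restrict_mem measurableSet_Ici)).mono fun s hs => mul_le_mul_left (hI (s 0) hs) _
      _ = I * ∫⁻ s, chainProd g s ∂(Measure.pi fun _ => μ) :=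
          lintegral_const_mul _ (measurable_chainProd hg)
      _ ≤ I * I ^ (k + 1) := by gcongr
      _ = I ^ (k + 2) := (pow_succ' I _).symm

end chainProd

/-- If `f : ℝ → [0,∞)` is measurable with `∫_{x₀}^∞ f < ∞`, then
for every `x ≥ x₀` one has `J_n(x) ≤ (∫_{x₀}^∞ f)^{2n}`. -/
theorem chainJ_bound (n : ℕ) (hn : 1 ≤ n) (x₀ : ℝ) (f : ℝ → ℝ)
    (hf : Measurable f) (hf0 : ∀ t : ℝ, 0 ≤ f t)
    (hint : IntegrableOn f (Set.Ioi x₀)) :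
    ∀ x : ℝ, x₀ ≤ x →
      chainJ f n hn x ≤ ENNReal.ofReal ((∫ t in Set.Ioi x₀, f t) ^ (2 * n)) := by
  intro x hx
  let g : ℝ → ℝ≥0∞ := fun u => ENNReal.ofReal (f (x + u))
  have hI : ∀ c, 0 ≤ c → ∫⁻ s in Ici 0, g (s + c) ≤ ENNReal.ofReal (∫ t in Ioi x₀, f t) := by
    intro c hc
    rw [ofReal_integral_eq_lintegral_ofReal hint (ae_of_all _ hf0), restrict_Ioi_eq_restrict_Ici]
    simp only [g, add_left_comm x]
    exact setLIntegral_Ici_zero_comp_add_le _ (by linarith)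
  -- `chainJ` indexes the chain by `Fin m` with `m = 2 * n`, `chainProd` by `Fin (k + 1)`.
  have hchain : ∀ m (hm : 1 ≤ m), ∫⁻ t : Fin m → ℝ, (∏ j : Fin (m - 1),
      g (t ⟨j, by omega⟩ + t ⟨j + 1, by omega⟩)) * g (t ⟨m - 1, by omega⟩)
      ∂(Measure.pi fun _ => volume.restrict (Ici 0)) ≤
        ENNReal.ofReal (∫ t in Ioi x₀, f t) ^ m := by
    intro m hm
    obtain ⟨k, rfl⟩ := Nat.exists_eq_add_of_le' hm
    exact lintegral_chainProd_le (by fun_prop) hI k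
  rw [chainJ, volume_restrict_nonneg_eq_pi,
    ofReal_pow (setIntegral_nonneg measurableSet_Ioi fun t _ => hf0 t)]
  simp only [add_assoc]
  exact hchain (2 * n) (by omega)
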